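/- arXiv:2202.04033 — 3 statements merged into one kernel-verified Lean document; each statement's English description precedes it below -/
import Mathlib

section
/- Let Ω ⊆ ℝ^d be a connected open set and H an open affine half-space with σ_H(Ω) = Ω. Then both Ω ∩ H and Ω ∩ (closure(H))^c are connected. -/
open Set Metric MeasureTheory
open scoped ENNReal

noncomputable def sigmaH {d : ℕ} (h : EuclideanSpace ℝ (Fin d)) (c : ℝ)
    (x : EuclideanSpace ℝ (Fin d)) : EuclideanSpace ℝ (Fin d) :=
  x + (2 * (c - (inner ℝ x h : ℝ))) • h

def halfSp {d : ℕ} (h : EuclideanSpace ℝ (Fin d)) (c : ℝ) :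
    Set (EuclideanSpace ℝ (Fin d)) :=
  {x | (inner ℝ x h : ℝ) < c}

noncomputable def polz {d : ℕ} (h : EuclideanSpace ℝ (Fin d)) (c : ℝ)
    (A : Set (EuclideanSpace ℝ (Fin d))) : Set (EuclideanSpace ℝ (Fin d)) :=
  ((A ∪ sigmaH h c '' A) ∩ halfSp h c) ∪ (A ∩ sigmaH h c '' A)

noncomputable def dpolz {d : ℕ} (h : EuclideanSpace ℝ (Fin d)) (c : ℝ)
    (A : Set (EuclideanSpace ℝ (Fin d))) : Set (EuclideanSpace ℝ (Fin d)) :=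
  ((A ∪ sigmaH h c '' A) ∩ (halfSp h c)ᶜ) ∪ (A ∩ sigmaH h c '' A)

/-! The fold `x ↦ if x ∈ closure H then x else σ_H x` is continuous and maps `Ω` onto
`Ω ∩ closure H`, which is therefore connected. Near each of its points, `Ω ∩ H` looks like a
half-ball, which is convex; hence a separation of `Ω ∩ H` would propagate to a separation of
`Ω ∩ closure H`. The other half is the mirror image `σ_H (Ω ∩ H)`. -/

open scoped RealInnerProductSpace

theorem isPreconnected_of_subset_closure_of_forall_isPreconnected_inter {X : Type*}
    [TopologicalSpace X] {s t : Set X} (ht : IsPreconnected t) (hst : s ⊆ t)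
    (hts : t ⊆ closure s) (hloc : ∀ x ∈ t, ∃ w, IsOpen w ∧ x ∈ w ∧ IsPreconnected (w ∩ s)) :
    IsPreconnected s := by
  rw [isPreconnected_iff_subset_of_disjoint] at ht ⊢
  intro u v hu hv hsuv huv
  let U := ⋃₀ {w | IsOpen w ∧ w ∩ s ⊆ u}
  let V := ⋃₀ {w | IsOpen w ∧ w ∩ s ⊆ v}
  have htUV : t ⊆ U ∪ V := by
    intro x hx
    obtain ⟨w, hw, hxw, hws⟩ := hloc x hx
    have hwuv : w ∩ s ∩ (u ∩ v) = ∅ :=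
      eq_empty_of_subset_empty (huv ▸ inter_subset_inter_left _ inter_subset_right)
    rcases isPreconnected_iff_subset_of_disjoint.mp hws u v hu hv
        (inter_subset_right.trans hsuv) hwuv with hwu | hwv
    · exact Or.inl ⟨w, ⟨hw, hwu⟩, hxw⟩
    · exact Or.inr ⟨w, ⟨hw, hwv⟩, hxw⟩
  have hUV : t ∩ (U ∩ V) = ∅ := by
    refine eq_empty_of_forall_notMem fun x ⟨hxt, hxU, hxV⟩ => ?_
    obtain ⟨w₁, ⟨hw₁, hw₁u⟩, hxw₁⟩ := hxU
    obtain ⟨w₂, ⟨hw₂, hw₂v⟩, hxw₂⟩ := hxV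
    obtain ⟨y, ⟨hyw₁, hyw₂⟩, hys⟩ :=
      mem_closure_iff.mp (hts hxt) _ (hw₁.inter hw₂) ⟨hxw₁, hxw₂⟩
    exact (huv ▸ ⟨hys, hw₁u ⟨hyw₁, hys⟩, hw₂v ⟨hyw₂, hys⟩⟩ : y ∈ (∅ : Set X))
  have hsub : ∀ {u' : Set X}, t ⊆ ⋃₀ {w | IsOpen w ∧ w ∩ s ⊆ u'} → s ⊆ u' := by
    intro u' htu x hxs
    obtain ⟨w, ⟨-, hwu⟩, hxw⟩ := htu (hst hxs)
    exact hwu ⟨hxw, hxs⟩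
  exact (ht U V (isOpen_sUnion fun _ hw => hw.1) (isOpen_sUnion fun _ hw => hw.1) htUV hUV).imp
    hsub hsub

theorem isConnected_of_subset_closure_of_forall_isPreconnected_inter {X : Type*}
    [TopologicalSpace X] {s t : Set X} (ht : IsConnected t) (hst : s ⊆ t)
    (hts : t ⊆ closure s) (hloc : ∀ x ∈ t, ∃ w, IsOpen w ∧ x ∈ w ∧ IsPreconnected (w ∩ s)) :
    IsConnected s :=
  ⟨closure_nonempty_iff.mp (ht.nonempty.mono hts),
    isPreconnected_of_subset_closure_of_forall_isPreconnected_inter ht.isPreconnected hst hts hloc⟩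

section Reflection

variable {d : ℕ} {h : EuclideanSpace ℝ (Fin d)} {c : ℝ}

theorem inner_sigmaH (hh : ‖h‖ = 1) (x : EuclideanSpace ℝ (Fin d)) :
    ⟪sigmaH h c x, h⟫ = 2 * c - ⟪x, h⟫ := by
  rw [sigmaH, inner_add_left, real_inner_smul_left, real_inner_self_eq_norm_sq, hh]
  ring

theorem sigmaH_involutive (hh : ‖h‖ = 1) : Function.Involutive (sigmaH h c) := by
  intro x
  rw [sigmaH, inner_sigmaH hh, sigmaH, add_assoc, ← add_smul,
    show 2 * (c - ⟪x, h⟫) + 2 * (c - (2 * c - ⟪x, h⟫)) = 0 by ring, zero_smul, add_zero]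

theorem continuous_sigmaH : Continuous (sigmaH h c) := by
  unfold sigmaH
  fun_prop

theorem sigmaH_eq_self {x : EuclideanSpace ℝ (Fin d)} (hx : ⟪x, h⟫ = c) : sigmaH h c x = x := by
  simp [sigmaH, hx]

theorem convex_halfSp : Convex ℝ (halfSp h c) :=
  convex_halfSpace_lt ⟨fun a b => inner_add_left a b h, fun t a => real_inner_smul_left a h t⟩ c

theorem closure_halfSp (hh : h ≠ 0) : closure (halfSp h c) = {x | ⟪x, h⟫ ≤ c} := by
  have hsurj : Function.Surjective (innerSL ℝ h) := fun t =>
    ⟨(t / ‖h‖ ^ 2) • h, by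
      rw [innerSL_apply_apply, real_inner_smul_right, real_inner_self_eq_norm_sq,
        div_mul_cancel₀ _ (by positivity)]⟩
  have hpre : halfSp h c = innerSL ℝ h ⁻¹' Iio c := by
    ext x; simp [halfSp, real_inner_comm]
  rw [hpre, ← ((innerSL ℝ h).isOpenMap hsurj).preimage_closure_eq_closure_preimage
    (innerSL ℝ h).continuous, closure_Iio]
  ext x; simp [real_inner_comm]

noncomputable def foldH (h : EuclideanSpace ℝ (Fin d)) (c : ℝ) (x : EuclideanSpace ℝ (Fin d)) :
    EuclideanSpace ℝ (Fin d) :=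
  if ⟪x, h⟫ ≤ c then x else sigmaH h c x

theorem continuous_foldH : Continuous (foldH h c) :=
  continuous_id.if_le continuous_sigmaH (by fun_prop) continuous_const
    fun _ hx => (sigmaH_eq_self hx).symm

theorem inner_foldH_le (hh : ‖h‖ = 1) (x : EuclideanSpace ℝ (Fin d)) : ⟪foldH h c x, h⟫ ≤ c := by
  unfold foldH
  split_ifs with hx
  · exact hx
  · rw [inner_sigmaH hh]; linarith

theorem isConnected_inter_halfSp (hh : ‖h‖ = 1) {Ω : Set (EuclideanSpace ℝ (Fin d))}
    (hΩo : IsOpen Ω) (hΩc : IsConnected Ω) (hsym : MapsTo (sigmaH h c) Ω Ω) :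
    IsConnected (Ω ∩ halfSp h c) := by
  have hfold : MapsTo (foldH h c) Ω (Ω ∩ closure (halfSp h c)) := fun x hx => by
    refine ⟨?_, ?_⟩
    · unfold foldH; split_ifs
      exacts [hx, hsym hx]
    · rw [closure_halfSp (norm_ne_zero_iff.mp (hh ▸ one_ne_zero))]
      exact inner_foldH_le hh x
  refine isConnected_of_subset_closure_of_forall_isPreconnected_inter
    (hΩc.image _ continuous_foldH.continuousOn) (fun x hx => ⟨x, hx.1, if_pos hx.2.le⟩)
    ((image_subset_iff.mpr hfold).trans hΩo.inter_closure) ?_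
  rintro _ ⟨x, hx, rfl⟩
  obtain ⟨r, hr, hball⟩ := Metric.isOpen_iff.mp hΩo _ (hfold hx).1
  refine ⟨ball (foldH h c x) r, isOpen_ball, mem_ball_self hr, ?_⟩
  rw [← inter_assoc, inter_eq_left.mpr hball]
  exact ((convex_ball _ r).inter convex_halfSp).isPreconnected

theorem sigmaH_image_inter_halfSp (hh : ‖h‖ = 1) {Ω : Set (EuclideanSpace ℝ (Fin d))}
    (hsym : MapsTo (sigmaH h c) Ω Ω) :
    sigmaH h c '' (Ω ∩ halfSp h c) = Ω ∩ (closure (halfSp h c))ᶜ := by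
  have hmem (x) : sigmaH h c x ∈ Ω ↔ x ∈ Ω :=
    ⟨fun hx => sigmaH_involutive (c := c) hh x ▸ hsym hx, fun hx => hsym hx⟩
  ext x
  rw [(sigmaH_involutive hh).image_eq_preimage_symm,
    closure_halfSp (norm_ne_zero_iff.mp (hh ▸ one_ne_zero))]
  simp only [mem_preimage, mem_inter_iff, hmem, halfSp, mem_compl_iff, mem_ofPred_eq, not_le,
    inner_sigmaH hh]
  constructor <;> rintro ⟨hx, hlt⟩ <;> exact ⟨hx, by linarith⟩

end Reflection

/-- A symmetric domain intersected with the (open) half-space, and with the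
complement of its closure, is connected. -/
theorem stmt8 {d : ℕ} (h : EuclideanSpace ℝ (Fin d)) (c : ℝ) (hh : ‖h‖ = 1)
    (Ω : Set (EuclideanSpace ℝ (Fin d))) (hΩo : IsOpen Ω) (hΩc : IsConnected Ω)
    (hsym : sigmaH h c '' Ω = Ω) :
    IsConnected (Ω ∩ halfSp h c) ∧ IsConnected (Ω ∩ (closure (halfSp h c))ᶜ) := by
  have hmaps : MapsTo (sigmaH h c) Ω Ω := (mapsTo_image _ _).mono_right hsym.subset
  have hH := isConnected_inter_halfSp hh hΩo hΩc hmaps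
  exact ⟨hH, sigmaH_image_inter_halfSp hh hmaps ▸ hH.image _ continuous_sigmaH.continuousOn⟩
end

section
/- If a set A ⊆ ℝ^d is foliated Schwarz symmetric with respect to both rays a + ℝ⁺η and a − ℝ⁺η for some a ∈ ℝ^d and unit vector η, then A is radially symmetric with respect to a, i.e., for every r > 0, if A ∩ ∂B_r(a) ≠ ∅ then ∂B_r(a) ⊆ A. -/
open Set Metric MeasureTheory
open scoped ENNReal

/-- Foliated Schwarz symmetry with respect to a ray. -/
def FSS {d : ℕ} (a η : EuclideanSpace ℝ (Fin d))
    (A : Set (EuclideanSpace ℝ (Fin d))) : Prop :=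
  ∀ r : ℝ, 0 < r → ∃ ρ : ℝ, 0 ≤ ρ ∧
    A ∩ Metric.sphere a r = Metric.ball (a + r • η) ρ ∩ Metric.sphere a r

/-! On the sphere of radius `r` about `a`, the squared distances to the two poles `a ± v`
(`‖v‖ = r`) sum to `4 r²`, so a ball about one pole cuts out the same set as a superlevel set of the
squared distance to the other. A subset of the sphere that is cut out both by a strict sublevel set
and by a strict superlevel set of one function is empty or the whole sphere. -/

lemma subset_of_inter_eq_sublevel_of_inter_eq_superlevel {X α : Type*} [LinearOrder α]
    {f : X → α} {B S : Set X} {c₁ c₂ : α}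
    (h₁ : B ∩ S = {x | f x < c₁} ∩ S) (h₂ : B ∩ S = {x | c₂ < f x} ∩ S)
    (hne : (B ∩ S).Nonempty) : S ⊆ B := by
  obtain ⟨x, hx⟩ := hne
  have hx₁ : f x < c₁ := (h₁ ▸ hx).1
  have hx₂ : c₂ < f x := (h₂ ▸ hx).1
  intro y hy
  rcases lt_or_ge (f y) c₁ with hy₁ | hy₁
  · exact (h₁.symm ▸ ⟨hy₁, hy⟩ : y ∈ B ∩ S).1
  · exact (h₂.symm ▸ ⟨hx₂.trans (hx₁.trans_le hy₁), hy⟩ : y ∈ B ∩ S).1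

lemma ball_eq_setOf_dist_sq_lt {X : Type*} [PseudoMetricSpace X] {c : X} {ρ : ℝ} (hρ : 0 ≤ ρ) :
    ball c ρ = {z | dist z c ^ 2 < ρ ^ 2} := by
  ext z
  exact (sq_lt_sq₀ dist_nonneg hρ).symm

section Sphere

variable {E : Type*} [NormedAddCommGroup E] [InnerProductSpace ℝ E]

lemma dist_sq_add_dist_sq_of_mem_sphere {a v z : E} {r : ℝ} (hz : z ∈ sphere a r)
    (hv : ‖v‖ = r) : dist z (a + v) ^ 2 + dist z (a - v) ^ 2 = 4 * r ^ 2 := by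
  rw [mem_sphere_iff_norm] at hz
  have hplus : z - (a + v) = (z - a) - v := by abel
  have hminus : z - (a - v) = (z - a) + v := by abel
  rw [dist_eq_norm, dist_eq_norm, hplus, hminus, add_comm,
    parallelogram_law_with_norm ℝ (z - a) v, hz, hv]
  ring

lemma ball_sub_inter_sphere_eq_setOf_lt_dist_add_sq {a v : E} {r ρ : ℝ} (hv : ‖v‖ = r)
    (hρ : 0 ≤ ρ) :
    ball (a - v) ρ ∩ sphere a r = {z | 4 * r ^ 2 - ρ ^ 2 < dist z (a + v) ^ 2} ∩ sphere a r := by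
  ext z
  simp only [ball_eq_setOf_dist_sq_lt hρ, Set.mem_inter_iff, Set.mem_ofPred_eq, and_congr_left_iff]
  intro hz
  have := dist_sq_add_dist_sq_of_mem_sphere hz hv
  constructor <;> intro h <;> linarith

end Sphere

/-- A set foliated Schwarz symmetric with respect to two opposite rays is radial. -/
theorem stmt10 {d : ℕ} (a η : EuclideanSpace ℝ (Fin d)) (hη : ‖η‖ = 1)
    (A : Set (EuclideanSpace ℝ (Fin d)))
    (h1 : FSS a η A) (h2 : FSS a (-η) A) :
    ∀ r : ℝ, 0 < r → (A ∩ Metric.sphere a r).Nonempty → Metric.sphere a r ⊆ A := by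
  intro r hr hne
  obtain ⟨ρ₁, hρ₁, hA₁⟩ := h1 r hr
  obtain ⟨ρ₂, hρ₂, hA₂⟩ := h2 r hr
  have hv : ‖r • η‖ = r := by rw [norm_smul, hη, mul_one, Real.norm_of_nonneg hr.le]
  rw [smul_neg, ← sub_eq_add_neg, ball_sub_inter_sphere_eq_setOf_lt_dist_add_sq hv hρ₂] at hA₂
  rw [ball_eq_setOf_dist_sq_lt hρ₁] at hA₁
  exact subset_of_inter_eq_sublevel_of_inter_eq_superlevel hA₁ hA₂ hne
end

section
/- Let Ω₀ ⊆ ℝ^d be open with σ_H(Ω₀) = Ω₀ for an open affine half-space H, and let u ∈ C^{0,α}(Ω₀) be Hölder continuous with exponent α ∈ (0,1] and constant L. Then the polarization P_H(u) is also Hölder continuous on Ω₀ with the same exponent α and the same constant L. -/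
open Set Metric MeasureTheory
open scoped ENNReal

/-- Polarization of a function. -/
noncomputable def polFun {d : ℕ} (h : EuclideanSpace ℝ (Fin d)) (c : ℝ)
    (u : EuclideanSpace ℝ (Fin d) → ℝ) (x : EuclideanSpace ℝ (Fin d)) : ℝ :=
  if (inner ℝ x h : ℝ) < c then max (u x) (u (sigmaH h c x))
  else min (u x) (u (sigmaH h c x))

/-! Reflecting through `∂H` preserves distances, and for `x ∈ H`, `y ∉ H` reflecting just one of
the two points does not increase their distance. Hence each of the four differences
`u z - u w`, `z ∈ {x, σ x}`, `w ∈ {y, σ y}`, that enter `P_H u x - P_H u y` is controlled by the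
modulus of continuity at `‖x - y‖`, and `max`/`min` are `1`-Lipschitz in each argument. -/

lemma abs_max_sub_min_le {a b p q M : ℝ} (hap : |a - p| ≤ M) (haq : |a - q| ≤ M)
    (hbp : |b - p| ≤ M) (hbq : |b - q| ≤ M) : |max a b - min p q| ≤ M := by
  rcases max_cases a b with ⟨ha, -⟩ | ⟨ha, -⟩ <;> rcases min_cases p q with ⟨hp, -⟩ | ⟨hp, -⟩ <;>
    rwa [ha, hp]

section UnitVector

variable {E : Type*} [NormedAddCommGroup E] [InnerProductSpace ℝ E] {h : E}

lemma norm_add_smul_sq_of_norm_eq_one (hh : ‖h‖ = 1) (v : E) (t : ℝ) :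
    ‖v + t • h‖ ^ 2 = ‖v‖ ^ 2 + t * (2 * inner ℝ v h + t) := by
  rw [norm_add_sq_real, real_inner_smul_right, norm_smul, hh, Real.norm_eq_abs, mul_one, sq_abs]
  ring

lemma norm_add_smul_le_of_norm_eq_one (hh : ‖h‖ = 1) {v : E} {t : ℝ}
    (ht : t * (2 * inner ℝ v h + t) ≤ 0) : ‖v + t • h‖ ≤ ‖v‖ := by
  rw [← sq_le_sq₀ (norm_nonneg _) (norm_nonneg _), norm_add_smul_sq_of_norm_eq_one hh]
  linarith

end UnitVector

section Reflection

variable {d : ℕ} {h : EuclideanSpace ℝ (Fin d)} (c : ℝ)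

lemma norm_sigmaH_sub_sigmaH (hh : ‖h‖ = 1) (x y : EuclideanSpace ℝ (Fin d)) :
    ‖sigmaH h c x - sigmaH h c y‖ = ‖x - y‖ := by
  have hsub : sigmaH h c x - sigmaH h c y = (x - y) + (-2 * inner ℝ (x - y) h) • h := by
    simp only [sigmaH, inner_sub_left]; module
  rw [hsub, ← sq_eq_sq₀ (norm_nonneg _) (norm_nonneg _), norm_add_smul_sq_of_norm_eq_one hh]
  ring

variable {c}

lemma norm_sub_sigmaH_le (hh : ‖h‖ = 1) {x y : EuclideanSpace ℝ (Fin d)}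
    (hx : inner ℝ x h < c) (hy : c ≤ inner ℝ y h) : ‖x - sigmaH h c y‖ ≤ ‖x - y‖ := by
  have hsub : x - sigmaH h c y = (x - y) + (2 * (inner ℝ y h - c)) • h := by
    simp only [sigmaH]; module
  rw [hsub]
  apply norm_add_smul_le_of_norm_eq_one hh
  rw [inner_sub_left]
  nlinarith

lemma norm_sigmaH_sub_le (hh : ‖h‖ = 1) {x y : EuclideanSpace ℝ (Fin d)}
    (hx : inner ℝ x h < c) (hy : c ≤ inner ℝ y h) : ‖sigmaH h c x - y‖ ≤ ‖x - y‖ := by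
  have hsub : sigmaH h c x - y = (x - y) + (2 * (c - inner ℝ x h)) • h := by
    simp only [sigmaH]; module
  rw [hsub]
  apply norm_add_smul_le_of_norm_eq_one hh
  rw [inner_sub_left]
  nlinarith

lemma abs_max_sub_min_sigmaH_le (hh : ‖h‖ = 1) {S : Set (EuclideanSpace ℝ (Fin d))}
    (hS : MapsTo (sigmaH h c) S S) {u : EuclideanSpace ℝ (Fin d) → ℝ} {M : ℝ}
    {x y : EuclideanSpace ℝ (Fin d)} (hxH : inner ℝ x h < c) (hyH : c ≤ inner ℝ y h)
    (hx : x ∈ S) (hy : y ∈ S) (hu : ∀ z ∈ S, ∀ w ∈ S, ‖z - w‖ ≤ ‖x - y‖ → |u z - u w| ≤ M) :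
    |max (u x) (u (sigmaH h c x)) - min (u y) (u (sigmaH h c y))| ≤ M :=
  abs_max_sub_min_le (hu _ hx _ hy le_rfl) (hu _ hx _ (hS hy) (norm_sub_sigmaH_le hh hxH hyH))
    (hu _ (hS hx) _ hy (norm_sigmaH_sub_le hh hxH hyH))
    (hu _ (hS hx) _ (hS hy) (norm_sigmaH_sub_sigmaH c hh x y).le)

theorem abs_polFun_sub_le (hh : ‖h‖ = 1) {S : Set (EuclideanSpace ℝ (Fin d))}
    (hS : MapsTo (sigmaH h c) S S) {u : EuclideanSpace ℝ (Fin d) → ℝ} {ω : ℝ → ℝ}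
    (hω : MonotoneOn ω (Ici 0)) (hu : ∀ x ∈ S, ∀ y ∈ S, |u x - u y| ≤ ω ‖x - y‖) :
    ∀ x ∈ S, ∀ y ∈ S, |polFun h c u x - polFun h c u y| ≤ ω ‖x - y‖ := by
  intro x hx y hy
  have key : ∀ z ∈ S, ∀ w ∈ S, ‖z - w‖ ≤ ‖x - y‖ → |u z - u w| ≤ ω ‖x - y‖ :=
    fun z hz w hw hzw => (hu z hz w hw).trans (hω (norm_nonneg _) (norm_nonneg _) hzw)
  have hxy := key _ hx _ hy le_rfl
  have hσxy := key _ (hS hx) _ (hS hy) (norm_sigmaH_sub_sigmaH c hh x y).le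
  unfold polFun
  by_cases hxH : inner ℝ x h < c <;> by_cases hyH : inner ℝ y h < c <;>
    simp only [hxH, hyH, if_true, if_false]
  · exact (abs_max_sub_max_le_max _ _ _ _).trans (max_le hxy hσxy)
  · exact abs_max_sub_min_sigmaH_le hh hS hxH (not_lt.1 hyH) hx hy key
  · rw [abs_sub_comm, norm_sub_rev]
    exact abs_max_sub_min_sigmaH_le hh hS hyH (not_lt.1 hxH) hy hx (by rwa [norm_sub_rev])
  · exact (abs_min_sub_min_le_max _ _ _ _).trans (max_le hxy hσxy)

end Reflection

theorem stmt15_general {d : ℕ} (h : EuclideanSpace ℝ (Fin d)) (c : ℝ) (hh : ‖h‖ = 1)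
    (Ω₀ : Set (EuclideanSpace ℝ (Fin d))) (hsym : sigmaH h c '' Ω₀ = Ω₀)
    (α L : ℝ) (hα : 0 < α) (hL : 0 < L)
    (u : EuclideanSpace ℝ (Fin d) → ℝ)
    (hu : ∀ x ∈ Ω₀, ∀ y ∈ Ω₀, |u x - u y| ≤ L * ‖x - y‖ ^ α) :
    ∀ x ∈ Ω₀, ∀ y ∈ Ω₀, |polFun h c u x - polFun h c u y| ≤ L * ‖x - y‖ ^ α :=
  abs_polFun_sub_le hh (mapsTo_iff_image_subset.2 hsym.subset)
    (fun _ hs _ _ hst => mul_le_mul_of_nonneg_left (Real.rpow_le_rpow hs hst hα.le) hL.le) hu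

/-- Polarization preserves Hölder continuity on a reflection-symmetric domain,
with the same exponent and constant. -/
theorem stmt15 {d : ℕ} (h : EuclideanSpace ℝ (Fin d)) (c : ℝ) (hh : ‖h‖ = 1)
    (Ω₀ : Set (EuclideanSpace ℝ (Fin d))) (hsym : sigmaH h c '' Ω₀ = Ω₀)
    (α L : ℝ) (hα : 0 < α) (hα1 : α ≤ 1) (hL : 0 < L)
    (u : EuclideanSpace ℝ (Fin d) → ℝ)
    (hu : ∀ x ∈ Ω₀, ∀ y ∈ Ω₀, |u x - u y| ≤ L * ‖x - y‖ ^ α) :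
    ∀ x ∈ Ω₀, ∀ y ∈ Ω₀, |polFun h c u x - polFun h c u y| ≤ L * ‖x - y‖ ^ α :=
  stmt15_general h c hh Ω₀ hsym α L hα hL u hu
end
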